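/- arXiv:1506.03107 — 5 statements merged into one kernel-verified Lean document; each statement's English description precedes it below -/
import Mathlib

section
/- Let d′, d″ ≥ 1 be integers with d := d′ + d″, let σ′ ∈ S_{2d′} and σ″ ∈ S_{2d″}, and define σ ∈ S_{2d} by σ(r) := σ′(r) for 1 ≤ r ≤ 2d′ and σ(r) := σ″(r − 2d′) + 2d′ for 2d′ + 1 ≤ r ≤ 2d. Then t_σ = t_{σ′} · t_{σ″}, where the product is taken in the commutative ring R ⊗_ℂ S. (This is the purely even case n = 0 of the paper's multiplicativity lemma for the invariant tensors t_σ.) -/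
/-!
Index functions on `2 * (d' + d'')` points are exactly the concatenations of index functions
`i'` on `2 * d'` and `i''` on `2 * d''` points. The `y`-monomial of a concatenation is the product
of the `y`-monomials of `i'` and `i''`, and since `σ` acts blockwise, the concatenation composed
with `σ` is the concatenation of `i' ∘ σ'` and `i'' ∘ σ''`, so the same holds for the
`x`-monomials. Hence the sum defining `t_σ` factors as the product of those for `t_σ'` and `t_σ''`.
-/

noncomputable section

open scoped TensorProduct

/-- The polynomial ring ℂ[y_{i,j} : 1 ≤ i ≤ j ≤ m] with the convention y_{i,j} = y_{j,i},
realized as the polynomial ring on variables indexed by unordered pairs from Fin m. -/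
abbrev PolyS (m : ℕ) := MvPolynomial (Sym2 (Fin m)) ℂ

/-- For k ∈ {0,…,d−1}, the index 2k ∈ {0,…,2d−1} (0-based version of the 1-based odd index 2k+1). -/
def idx0 (d : ℕ) (k : Fin d) : Fin (2 * d) := ⟨2 * (k : ℕ), by have := k.isLt; omega⟩

/-- For k ∈ {0,…,d−1}, the index 2k+1 ∈ {0,…,2d−1} (0-based version of the 1-based even index 2k+2). -/
def idx1 (d : ℕ) (k : Fin d) : Fin (2 * d) := ⟨2 * (k : ℕ) + 1, by have := k.isLt; omega⟩

/-- The invariant tensor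
`t_σ = 2^{-d} Σ_{i : {1,…,2d} → {1,…,m}} (y_{i_1,i_2} ⋯ y_{i_{2d−1},i_{2d}}) ⊗
(x_{i_{σ(1)},i_{σ(2)}} ⋯ x_{i_{σ(2d−1)},i_{σ(2d)}})` in R ⊗ S (indices written 0-based). -/
def tTen (m d : ℕ) (σ : Equiv.Perm (Fin (2 * d))) : PolyS m ⊗[ℂ] PolyS m :=
  ((1 : ℂ) / 2 ^ d) •
    ∑ i : Fin (2 * d) → Fin m,
      (∏ k : Fin d, MvPolynomial.X (Sym2.mk (i (idx0 d k)) (i (idx1 d k)))) ⊗ₜ[ℂ]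
        (∏ k : Fin d, MvPolynomial.X (Sym2.mk (i (σ (idx0 d k))) (i (σ (idx1 d k)))))

section PairingMonomial

variable (R : Type*) [CommSemiring R] {α : Type*}

def pairingMonomial (d : ℕ) (i : Fin (2 * d) → α) : MvPolynomial (Sym2 α) R :=
  ∏ k : Fin d, MvPolynomial.X (Sym2.mk (i (idx0 d k)) (i (idx1 d k)))

variable {R}

lemma pairingMonomial_append {d' d'' : ℕ} (i' : Fin (2 * d') → α) (i'' : Fin (2 * d'') → α) :
    pairingMonomial R (d' + d'') (Fin.append i' i'' ∘ Fin.cast (mul_add 2 d' d'')) =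
      pairingMonomial R d' i' * pairingMonomial R d'' i'' := by
  have cast_idx0_castAdd (k : Fin d') :
      Fin.cast (mul_add 2 d' d'') (idx0 (d' + d'') (Fin.castAdd d'' k)) =
        Fin.castAdd (2 * d'') (idx0 d' k) := rfl
  have cast_idx1_castAdd (k : Fin d') :
      Fin.cast (mul_add 2 d' d'') (idx1 (d' + d'') (Fin.castAdd d'' k)) =
        Fin.castAdd (2 * d'') (idx1 d' k) := rfl
  have cast_idx0_natAdd (k : Fin d'') :
      Fin.cast (mul_add 2 d' d'') (idx0 (d' + d'') (Fin.natAdd d' k)) =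
        Fin.natAdd (2 * d') (idx0 d'' k) := Fin.ext (mul_add 2 d' k)
  have cast_idx1_natAdd (k : Fin d'') :
      Fin.cast (mul_add 2 d' d'') (idx1 (d' + d'') (Fin.natAdd d' k)) =
        Fin.natAdd (2 * d') (idx1 d'' k) := Fin.ext (by
          change 2 * (d' + (k : ℕ)) + 1 = 2 * d' + (2 * k + 1); ring)
  simp only [pairingMonomial, Fin.prod_univ_add, Function.comp_apply, cast_idx0_castAdd,
    cast_idx1_castAdd, cast_idx0_natAdd, cast_idx1_natAdd, Fin.append_left, Fin.append_right]

end PairingMonomial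

lemma Fintype.sum_fun_fin_eq_sum_sum_append {α M : Type*} [Fintype α]
    [AddCommMonoid M] {n' n'' N : ℕ} (h : n' + n'' = N) (f : (Fin N → α) → M) :
    ∑ i, f i = ∑ i' : Fin n' → α, ∑ i'' : Fin n'' → α, f (Fin.append i' i'' ∘ Fin.cast h.symm) := by
  subst h
  rw [← Fintype.sum_prod_type']
  exact (Fintype.sum_equiv (Fin.appendEquiv n' n'') _ _ fun _ => rfl).symm

lemma Fin.append_comp_cast_comp_perm {α : Type*} {n' n'' N : ℕ} (h : n' + n'' = N)
    (σ' : Equiv.Perm (Fin n')) (σ'' : Equiv.Perm (Fin n'')) (σ : Equiv.Perm (Fin N))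
    (hσ1 : ∀ (r : ℕ) (hr : r < n'), ((σ ⟨r, by omega⟩ : Fin N) : ℕ) = σ' ⟨r, hr⟩)
    (hσ2 : ∀ (r : ℕ) (hr : r < n''), ((σ ⟨n' + r, by omega⟩ : Fin N) : ℕ) = σ'' ⟨r, hr⟩ + n')
    (i' : Fin n' → α) (i'' : Fin n'' → α) :
    (Fin.append i' i'' ∘ Fin.cast h.symm) ∘ σ =
      Fin.append (i' ∘ σ') (i'' ∘ σ'') ∘ Fin.cast h.symm := by
  subst h
  funext j
  refine Fin.addCases (fun r => ?_) (fun r => ?_) j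
  · have : σ (Fin.castAdd n'' r) = Fin.castAdd n'' (σ' r) := Fin.ext (hσ1 r r.isLt)
    simp [this]
  · have : σ (Fin.natAdd n' r) = Fin.natAdd n' (σ'' r) :=
      Fin.ext ((hσ2 r r.isLt).trans (add_comm _ _))
    simp [this]

lemma tTen_eq_smul_sum_pairingMonomial (m d : ℕ) (σ : Equiv.Perm (Fin (2 * d))) :
    tTen m d σ = ((1 : ℂ) / 2 ^ d) •
      ∑ i : Fin (2 * d) → Fin m, pairingMonomial ℂ d i ⊗ₜ[ℂ] pairingMonomial ℂ d (i ∘ σ) :=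
  rfl

theorem statement5 (m d' d'' : ℕ)
    (σ' : Equiv.Perm (Fin (2 * d'))) (σ'' : Equiv.Perm (Fin (2 * d'')))
    (σ : Equiv.Perm (Fin (2 * (d' + d''))))
    (hσ1 : ∀ (r : ℕ) (h : r < 2 * d'),
      ((σ ⟨r, by omega⟩ : Fin (2 * (d' + d''))) : ℕ) = ((σ' ⟨r, h⟩ : Fin (2 * d')) : ℕ))
    (hσ2 : ∀ (r : ℕ) (h : r < 2 * d''),
      ((σ ⟨2 * d' + r, by omega⟩ : Fin (2 * (d' + d''))) : ℕ) =
        ((σ'' ⟨r, h⟩ : Fin (2 * d'')) : ℕ) + 2 * d') :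
    tTen m (d' + d'') σ = tTen m d' σ' * tTen m d'' σ'' := by
  have h : 2 * d' + 2 * d'' = 2 * (d' + d'') := (mul_add 2 d' d'').symm
  simp only [tTen_eq_smul_sum_pairingMonomial, smul_mul_smul_comm, Finset.sum_mul_sum,
    Algebra.TensorProduct.tmul_mul_tmul, Fintype.sum_fun_fin_eq_sum_sum_append h,
    Fin.append_comp_cast_comp_perm h σ' σ'' σ hσ1 hσ2, pairingMonomial_append]
  rw [pow_add, one_div_mul_one_div]
end
end

section
/- For every σ ∈ S_{2d} there exist σ′, σ″ ∈ H_{2d}, an integer r ≥ 1, and integers 0 = d_0 < d_1 < ⋯ < d_{r−1} < d_r = d such that σ′σσ″ = τ_{d_0,d_1} τ_{d_1,d_2} ⋯ τ_{d_{r−1},d_r}, where for integers 0 ≤ a < b ≤ d, τ_{a,b} ∈ S_{2d} denotes the cycle (2a+2, 2a+4, …, 2b−2, 2b) (sending 2a+2 ↦ 2a+4, …, 2b−2 ↦ 2b, 2b ↦ 2a+2, and fixing all other points of {1,…,2d}). -/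
/-!
STATEMENT 7: For every σ ∈ S_{2d} there are σ′, σ″ in the hyperoctahedral group H_{2d} and
integers 0 = d_0 < d_1 < ⋯ < d_r = d such that σ′σσ″ = τ_{d_0,d_1} ⋯ τ_{d_{r−1},d_r}, where
τ_{a,b} is the cycle (2a+2, 2a+4, …, 2b) (1-based).  We characterize the product of the
disjoint cycles τ_{d_{j-1},d_j} pointwise (0-based): it fixes every even position 2s, and it
maps the odd position 2s+1 (for d_{j−1} ≤ s < d_j) to 2s+3 if s+1 < d_j, and to 2d_{j−1}+1
if s+1 = d_j.
-/

/-- The fixed-point-free involution σ∘ = (1 2)(3 4)⋯(2d−1 2d) of {0,…,2d−1} (0-based),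
swapping 2k ↔ 2k+1 for each k. -/
def pairSwap (d : ℕ) : Equiv.Perm (Fin (2 * d)) :=
  Function.Involutive.toPerm
    (fun r => ⟨2 * ((r : ℕ) / 2) + (1 - (r : ℕ) % 2), by have := r.isLt; omega⟩)
    (by
      intro r
      apply Fin.ext
      simp only []
      have := r.isLt
      omega)

/-!
Put `τ := σ σ∘ σ⁻¹`. Both `σ∘` and `τ` are fixed-point-free involutions, so the graph whose edges
are the pairs of `σ∘` and of `τ` is a disjoint union of alternating cycles. Walking around the
cycle through `x` visits `σ∘ (ρ^k x)` and `ρ^k x` for `ρ = τ σ∘` and `k` below the `ρ`-period `L`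
of `x`; the walk never meets itself because `σ∘ y = ρ^n y` is impossible (`n = 0, 1` are excluded
by fixed-point-freeness, and `ρ (σ∘ (ρ y)) = σ∘ y` lowers `n` by two). Laying the cycles out as
consecutive blocks of `{0, …, 2d-1}` gives a bijection `Ψ` commuting with `σ∘` and carrying the
model involution `π σ∘ π⁻¹` to `τ`, where `π` rotates the odd points of each block. Then
`σ' = Ψ⁻¹` and `σ'' = σ⁻¹ Ψ π` lie in `H_{2d}` and `σ' σ σ'' = π`.
-/
open Equiv Function

lemma pairSwap_val {d : ℕ} (i : Fin (2 * d)) :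
    (pairSwap d i : ℕ) = 2 * (i / 2) + (1 - i % 2) := rfl

lemma pairSwap_involutive (d : ℕ) : Involutive (pairSwap d) :=
  fun i => Fin.ext (by simp only [pairSwap_val]; omega)

lemma pairSwap_ne_self {d : ℕ} (i : Fin (2 * d)) : pairSwap d i ≠ i := fun h => by
  have := congrArg Fin.val h
  rw [pairSwap_val] at this
  omega

noncomputable def oddRotate (L : ℕ) : Perm (Fin (2 * L)) :=
  Equiv.ofBijective
    (fun i => ⟨if (i : ℕ) % 2 = 0 then i else if (i : ℕ) + 2 < 2 * L then (i : ℕ) + 2 else 1,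
      by have := i.isLt; split_ifs <;> omega⟩)
    (Finite.injective_iff_bijective.mp fun i j h => by
      have h := congrArg Fin.val h
      dsimp only at h
      have := i.isLt; have := j.isLt
      ext; split_ifs at h <;> omega)

lemma oddRotate_val {L : ℕ} (i : Fin (2 * L)) :
    (oddRotate L i : ℕ) =
      if (i : ℕ) % 2 = 0 then (i : ℕ) else if (i : ℕ) + 2 < 2 * L then (i : ℕ) + 2 else 1 :=
  rfl

section AlternatingWalk

variable {α : Type*} {e τ : Perm α}

def alternatingWalk (e τ : Perm α) (x : α) (i : ℕ) : α :=
  if i % 2 = 0 then e ((τ ∘ e)^[i / 2] x) else (τ ∘ e)^[i / 2] x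

theorem apply_ne_iterate_apply (he : Involutive e) (he' : ∀ x, e x ≠ x) (hτ : Involutive τ)
    (hτ' : ∀ x, τ x ≠ x) : ∀ (n : ℕ) (y : α), e y ≠ (τ ∘ e)^[n] y
  | 0, y => he' y
  | 1, y => fun h => hτ' (e y) h.symm
  | n + 2, y => fun h => apply_ne_iterate_apply he he' hτ hτ' n (τ (e y)) <|
      τ.injective.comp e.injective <| by
        rw [comp_apply, he, hτ]
        conv_lhs => rw [h]
        rw [iterate_succ_apply', iterate_succ_apply]
        rfl

lemma apply_iterate_ne_iterate_apply (he : Involutive e) (he' : ∀ x, e x ≠ x)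
    (hτ : Involutive τ) (hτ' : ∀ x, τ x ≠ x) (x : α) {a : ℕ} (ha : a < minimalPeriod (τ ∘ e) x)
    (b : ℕ) : e ((τ ∘ e)^[a] x) ≠ (τ ∘ e)^[b] x := by
  have : (τ ∘ e)^[b] x = (τ ∘ e)^[b + (minimalPeriod (τ ∘ e) x - a)] ((τ ∘ e)^[a] x) := by
    rw [iterate_add_apply, ← iterate_add_apply _ _ a, Nat.sub_add_cancel ha.le,
      iterate_minimalPeriod]
  rw [this]
  exact apply_ne_iterate_apply he he' hτ hτ' _ _

lemma minimalPeriod_comp_pos [Finite α] (x : α) : 0 < minimalPeriod (τ ∘ e) x :=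
  minimalPeriod_pos_of_mem_periodicPts ((τ.injective.comp e.injective).mem_periodicPts x)

lemma alternatingWalk_pairSwap (he : Involutive e) (x : α) {L : ℕ} (i : Fin (2 * L)) :
    alternatingWalk e τ x (pairSwap L i) = e (alternatingWalk e τ x i) := by
  have hdiv : (2 * ((i : ℕ) / 2) + (1 - (i : ℕ) % 2)) / 2 = (i : ℕ) / 2 := by omega
  rw [pairSwap_val, alternatingWalk, alternatingWalk, hdiv]
  rcases Nat.mod_two_eq_zero_or_one i with h | h
  · rw [if_neg (by omega), if_pos h, he]
  · rw [if_pos (by omega), if_neg (by omega)]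

lemma alternatingWalk_oddRotate (x : α) (i : Fin (2 * minimalPeriod (τ ∘ e) x)) :
    alternatingWalk e τ x (oddRotate _ i) =
      if (i : ℕ) % 2 = 0 then e ((τ ∘ e)^[i / 2] x) else (τ ∘ e)^[i / 2 + 1] x := by
  have := i.isLt
  rw [oddRotate_val]
  by_cases h : (i : ℕ) % 2 = 0
  · rw [if_pos h, if_pos h, alternatingWalk, if_pos h]
  · rw [if_neg h, if_neg h]
    split_ifs with hlt
    · rw [alternatingWalk, if_neg (by omega), show ((i : ℕ) + 2) / 2 = (i : ℕ) / 2 + 1 by omega]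
    · rw [show (i : ℕ) / 2 + 1 = minimalPeriod (τ ∘ e) x by omega, iterate_minimalPeriod]
      rfl

lemma alternatingWalk_oddRotate_pairSwap (hτ : Involutive τ) (x : α)
    (i : Fin (2 * minimalPeriod (τ ∘ e) x)) :
    alternatingWalk e τ x (oddRotate _ (pairSwap _ i)) =
      τ (alternatingWalk e τ x (oddRotate _ i)) := by
  have hdiv : (2 * ((i : ℕ) / 2) + (1 - (i : ℕ) % 2)) / 2 = (i : ℕ) / 2 := by omega
  rw [alternatingWalk_oddRotate, alternatingWalk_oddRotate, pairSwap_val, hdiv,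
    iterate_succ_apply']
  rcases Nat.mod_two_eq_zero_or_one i with h | h
  · rw [if_neg (by omega), if_pos h]
    rfl
  · rw [if_pos (by omega), if_neg (by omega), comp_apply, hτ]

lemma alternatingWalk_injective (he : Involutive e) (he' : ∀ x, e x ≠ x)
    (hτ : Involutive τ) (hτ' : ∀ x, τ x ≠ x) (x : α) :
    Injective fun i : Fin (2 * minimalPeriod (τ ∘ e) x) => alternatingWalk e τ x i := by
  intro i j h
  have hinj := iterate_injOn_Iio_minimalPeriod (f := τ ∘ e) (x := x)
  have hi := i.isLt
  have hj := j.isLt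
  simp only [alternatingWalk] at h
  ext
  split_ifs at h with h₁ h₂ h₂
  · have := hinj (Set.mem_Iio.2 (by omega)) (Set.mem_Iio.2 (by omega)) (e.injective h)
    omega
  · exact absurd h (apply_iterate_ne_iterate_apply he he' hτ hτ' x (by omega) _)
  · exact absurd h.symm (apply_iterate_ne_iterate_apply he he' hτ hτ' x (by omega) _)
  · have := hinj (Set.mem_Iio.2 (by omega)) (Set.mem_Iio.2 (by omega)) h
    omega

open MulAction Subgroup in
lemma alternatingWalk_mem_orbit (x : α) (i : ℕ) :
    alternatingWalk e τ x i ∈ orbit (closure {e, τ}) x := by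
  have hmem {g : Perm α} (hg : g ∈ closure {e, τ}) {y : α} (hy : y ∈ orbit (closure {e, τ}) x) :
      g y ∈ orbit (closure {e, τ}) x :=
    mem_orbit_of_mem_orbit (⟨g, hg⟩ : closure {e, τ}) hy
  have he : e ∈ closure {e, τ} := subset_closure (by simp)
  have hτ : τ ∈ closure {e, τ} := subset_closure (by simp)
  have hiter (k : ℕ) : (τ ∘ e)^[k] x ∈ orbit (closure {e, τ}) x := by
    induction k with
    | zero => exact mem_orbit_self x
    | succ k ih => rw [iterate_succ_apply']; exact hmem hτ (hmem he ih)
  unfold alternatingWalk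
  split_ifs
  exacts [hmem he (hiter _), hiter _]

open MulAction Subgroup in
lemma exists_alternatingWalk_eq_of_mem_orbit [Finite α] (he : Involutive e) (hτ : Involutive τ)
    {x y : α} (hy : y ∈ orbit (closure {e, τ}) x) :
    ∃ i : Fin (2 * minimalPeriod (τ ∘ e) x), alternatingWalk e τ x i = y := by
  let W : Set α := Set.range fun i : Fin (2 * minimalPeriod (τ ∘ e) x) => alternatingWalk e τ x i
  have hW {g : Perm α} (hg : Involutive g) (hgW : ∀ z ∈ W, g z ∈ W) (z : α) : z ∈ W ↔ g z ∈ W :=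
    ⟨hgW z, fun h => hg z ▸ hgW _ h⟩
  have heW : ∀ z ∈ W, e z ∈ W := by
    rintro _ ⟨i, rfl⟩
    exact ⟨pairSwap _ i, alternatingWalk_pairSwap he x i⟩
  have hτW : ∀ z ∈ W, τ z ∈ W := by
    rintro _ ⟨i, rfl⟩
    set j := pairSwap _ ((oddRotate _).symm i)
    have hi : i = oddRotate _ (pairSwap _ j) := by simp [j, pairSwap_involutive _ _]
    simp only [hi, alternatingWalk_oddRotate_pairSwap hτ, hτ _]
    exact ⟨_, rfl⟩
  have hclosure : ∀ g ∈ closure {e, τ}, ∀ z, z ∈ W ↔ g z ∈ W := by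
    intro g hg
    induction hg using closure_induction with
    | mem g hg =>
      rcases hg with rfl | rfl
      exacts [hW he heW, hW hτ hτW]
    | one => simp
    | mul g h _ _ hg hh => exact fun z => (hh z).trans (hg (h z))
    | inv g _ hg => exact fun z => by simpa using (hg (g⁻¹ z)).symm
  obtain ⟨⟨g, hg⟩, rfl⟩ := hy
  have hx : x ∈ W := ⟨⟨1, by have := minimalPeriod_comp_pos (e := e) (τ := τ) x; omega⟩,
    by simp [alternatingWalk]⟩
  exact (hclosure g hg x).1 hx

open MulAction Subgroup in
theorem exists_sigma_equiv_intertwining [Finite α] (he : Involutive e) (he' : ∀ x, e x ≠ x)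
    (hτ : Involutive τ) (hτ' : ∀ x, τ x ≠ x) :
    ∃ (r : ℕ) (L : Fin r → ℕ) (Φ : (Σ j, Fin (2 * L j)) ≃ α), (∀ j, 0 < L j) ∧
      (∀ j i, Φ ⟨j, pairSwap (L j) i⟩ = e (Φ ⟨j, i⟩)) ∧
      ∀ j i, Φ ⟨j, oddRotate (L j) (pairSwap (L j) i)⟩ = τ (Φ ⟨j, oddRotate (L j) i⟩) := by
  let S := orbitRel (closure {e, τ}) α
  let q : Fin (Nat.card (Quotient S)) ≃ Quotient S := (Finite.equivFin _).symm
  let x j := (q j).out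
  have hx (y : α) : y ∈ orbit (closure {e, τ}) (x (q.symm (Quotient.mk S y))) :=
    Quotient.exact (s := S) (by simp [x])
  refine ⟨_, fun j => minimalPeriod (τ ∘ e) (x j),
    Equiv.ofBijective (fun p => alternatingWalk e τ (x p.1) p.2) ⟨?_, fun y => ?_⟩,
    fun j => minimalPeriod_comp_pos _, fun j i => alternatingWalk_pairSwap he _ i,
    fun j i => alternatingWalk_oddRotate_pairSwap hτ _ i⟩
  · rintro ⟨j, i⟩ ⟨j', i'⟩ (h : alternatingWalk e τ (x j) i = alternatingWalk e τ (x j') i')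
    have h₁ : S (alternatingWalk e τ (x j') i') (x j) :=
      h ▸ orbitRel_apply.2 (alternatingWalk_mem_orbit _ _)
    have h₂ : S (alternatingWalk e τ (x j') i') (x j') :=
      orbitRel_apply.2 (alternatingWalk_mem_orbit _ _)
    obtain rfl : j = j' := q.injective <| by
      rw [← Quotient.out_eq (q j), ← Quotient.out_eq (q j')]
      exact Quotient.sound (S.iseqv.trans (S.iseqv.symm h₁) h₂)
    obtain rfl := alternatingWalk_injective he he' hτ hτ' _ h
    rfl
  · obtain ⟨i, hi⟩ := exists_alternatingWalk_eq_of_mem_orbit he hτ (hx y)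
    exact ⟨⟨_, i⟩, hi⟩

end AlternatingWalk

section Blocks

variable {r d : ℕ} (L : Fin r → ℕ)

def blockStart (j : Fin (r + 1)) : ℕ :=
  ∑ i : Fin j, L (Fin.castLE (Nat.le_of_lt_succ j.isLt) i)

lemma blockStart_zero : blockStart L 0 = 0 := by
  simp [blockStart]

lemma blockStart_last : blockStart L (Fin.last r) = ∑ j, L j := by
  simp [blockStart]

lemma blockStart_succ (j : Fin r) :
    blockStart L j.succ = blockStart L j.castSucc + L j := by
  simp only [blockStart, Fin.val_succ, Fin.sum_univ_castSucc]
  rfl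

lemma strictMono_blockStart (hL : ∀ j, 0 < L j) : StrictMono (blockStart L) :=
  Fin.strictMono_iff_lt_succ.2 fun j => by
    rw [blockStart_succ]
    exact Nat.lt_add_of_pos_right (hL j)

def blockEquiv (h : ∑ j, L j = d) : (Σ j, Fin (2 * L j)) ≃ Fin (2 * d) :=
  finSigmaFinEquiv.trans (finCongr (by rw [← Finset.mul_sum, h]))

lemma blockEquiv_val (h : ∑ j, L j = d) (j : Fin r) (i : Fin (2 * L j)) :
    (blockEquiv L h ⟨j, i⟩ : ℕ) = 2 * blockStart L j.castSucc + i := by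
  simp [blockEquiv, blockStart, Finset.mul_sum]

lemma blockEquiv_pairSwap (h : ∑ j, L j = d) (j : Fin r) (i : Fin (2 * L j)) :
    blockEquiv L h ⟨j, pairSwap (L j) i⟩ = pairSwap d (blockEquiv L h ⟨j, i⟩) :=
  Fin.ext <| by rw [blockEquiv_val, pairSwap_val, pairSwap_val, blockEquiv_val]; omega

noncomputable def blockRotation (h : ∑ j, L j = d) : Perm (Fin (2 * d)) :=
  (blockEquiv L h).permCongr (sigmaCongrRight fun j => oddRotate (L j))

lemma blockRotation_blockEquiv (h : ∑ j, L j = d) (j : Fin r) (i : Fin (2 * L j)) :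
    blockRotation L h (blockEquiv L h ⟨j, i⟩) = blockEquiv L h ⟨j, oddRotate (L j) i⟩ := by
  simp [blockRotation, permCongr_apply]

lemma blockRotation_even (h : ∑ j, L j = d) (s : ℕ) (hs : s < d) :
    blockRotation L h ⟨2 * s, by omega⟩ = ⟨2 * s, by omega⟩ := by
  obtain ⟨⟨j, i⟩, hp⟩ := (blockEquiv L h).surjective ⟨2 * s, by omega⟩
  have hval := congrArg Fin.val hp
  rw [blockEquiv_val] at hval
  dsimp only at hval
  rw [← hp, blockRotation_blockEquiv]
  ext
  rw [blockEquiv_val, blockEquiv_val, oddRotate_val, if_pos (by omega)]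

lemma blockRotation_odd (h : ∑ j, L j = d) (j : Fin r) (s : ℕ) (hs : s < d)
    (h₁ : blockStart L j.castSucc ≤ s) (h₂ : s < blockStart L j.succ) :
    (blockRotation L h ⟨2 * s + 1, by omega⟩ : ℕ) =
      if s + 1 = blockStart L j.succ then 2 * blockStart L j.castSucc + 1 else 2 * s + 3 := by
  rw [blockStart_succ] at h₂ ⊢
  have hp : (⟨2 * s + 1, by omega⟩ : Fin (2 * d)) =
      blockEquiv L h ⟨j, ⟨2 * (s - blockStart L j.castSucc) + 1, by omega⟩⟩ :=
    Fin.ext <| by rw [blockEquiv_val]; dsimp only; omega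
  rw [hp, blockRotation_blockEquiv, blockEquiv_val, oddRotate_val]
  dsimp only
  split_ifs <;> omega

end Blocks

theorem exists_blockRotation_conj {d : ℕ} {τ : Perm (Fin (2 * d))} (hτ : Involutive τ)
    (hτ' : ∀ x, τ x ≠ x) :
    ∃ (r : ℕ) (L : Fin r → ℕ) (_ : ∀ j, 0 < L j) (h : ∑ j, L j = d) (Ψ : Perm (Fin (2 * d))),
      Ψ * pairSwap d = pairSwap d * Ψ ∧
      τ = Ψ * blockRotation L h * pairSwap d * (Ψ * blockRotation L h)⁻¹ := by
  obtain ⟨r, L, Φ, hL, hΦe, hΦτ⟩ :=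
    exists_sigma_equiv_intertwining (pairSwap_involutive d) pairSwap_ne_self hτ hτ'
  have h : ∑ j, L j = d := by
    have := Fintype.card_congr Φ
    simp only [Fintype.card_sigma, Fintype.card_fin, ← Finset.mul_sum] at this
    omega
  refine ⟨r, L, hL, h, (blockEquiv L h).symm.trans Φ, Equiv.ext fun y => ?_,
    eq_mul_inv_of_mul_eq (Equiv.ext fun y => ?_)⟩ <;>
  obtain ⟨⟨j, i⟩, rfl⟩ := (blockEquiv L h).surjective y
  · simp [← blockEquiv_pairSwap, hΦe]
  · simp [← blockEquiv_pairSwap, blockRotation_blockEquiv, hΦτ]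

theorem statement7 (d : ℕ) (hd : 1 ≤ d) (σ : Equiv.Perm (Fin (2 * d))) :
    ∃ σ' σ'' : Equiv.Perm (Fin (2 * d)),
      σ' * pairSwap d = pairSwap d * σ' ∧
      σ'' * pairSwap d = pairSwap d * σ'' ∧
      ∃ (r : ℕ) (_ : 1 ≤ r) (D : Fin (r + 1) → ℕ),
        D 0 = 0 ∧ D (Fin.last r) = d ∧ StrictMono D ∧
        (∀ (s : ℕ) (hs : s < d),
          (σ' * σ * σ'') ⟨2 * s, by omega⟩ = ⟨2 * s, by omega⟩) ∧
        (∀ (j : Fin r) (s : ℕ) (hs : s < d), D j.castSucc ≤ s → s < D j.succ →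
          (((σ' * σ * σ'') ⟨2 * s + 1, by omega⟩ : Fin (2 * d)) : ℕ) =
            if s + 1 = D j.succ then 2 * D j.castSucc + 1 else 2 * s + 3) := by
  have hτ : Involutive (σ * pairSwap d * σ⁻¹) := fun x => by
    simp [Perm.mul_apply, pairSwap_involutive d _]
  have hτ' (x : Fin (2 * d)) : (σ * pairSwap d * σ⁻¹) x ≠ x := fun h =>
    pairSwap_ne_self (σ⁻¹ x) (σ.injective (by simpa [Perm.mul_apply] using h))
  obtain ⟨r, L, hL, hsum, Ψ, hΨ, hconj⟩ := exists_blockRotation_conj hτ hτ'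
  set π := blockRotation L hsum
  have hr : 1 ≤ r := Nat.one_le_iff_ne_zero.2 fun hr => by
    subst hr
    simp only [Finset.univ_eq_empty, Finset.sum_empty] at hsum
    omega
  have hprod : Ψ⁻¹ * σ * (σ⁻¹ * Ψ * π) = π := by group
  refine ⟨Ψ⁻¹, σ⁻¹ * Ψ * π, (Commute.inv_left hΨ).eq, ?_, r, hr, blockStart L,
    blockStart_zero L, (blockStart_last L).trans hsum, strictMono_blockStart L hL, ?_, ?_⟩
  · calc σ⁻¹ * Ψ * π * pairSwap d = σ⁻¹ * (Ψ * π * pairSwap d * (Ψ * π)⁻¹) * (Ψ * π) := by group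
      _ = pairSwap d * (σ⁻¹ * Ψ * π) := by rw [← hconj]; group
  · intro s hs
    rw [hprod]
    exact blockRotation_even L hsum s hs
  · intro j s hs h₁ h₂
    rw [hprod]
    exact blockRotation_odd L hsum j s hs h₁ h₂
end

section
/- Let d ≥ 1 and let σ be a permutation of {1,…,2d}. Then there exist a_1,…,a_d, b_1,…,b_d ∈ {1,…,2d} and a permutation τ of {1,…,d} such that 2s−1 ≤ a_s ≤ 2s, 2s−1 ≤ b_s ≤ 2s, and σ(a_s) = b_{τ(s)} for all 1 ≤ s ≤ d. (This is the perfect-matching step in the paper's proof of the normal form for permutations modulo the hyperoctahedral group.) -/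
variable {d : ℕ}

def st8Blk (x : Fin (2 * d)) : Fin d := ⟨x.1 / 2, by omega⟩

def st8Pr (s : Fin d) : Finset (Fin (2 * d)) :=
  {⟨2 * s.1, by omega⟩, ⟨2 * s.1 + 1, by omega⟩}

lemma mem_pr {s : Fin d} {x : Fin (2 * d)} : x ∈ st8Pr s ↔ st8Blk x = s := by
  simp [st8Pr, st8Blk, Fin.ext_iff]
  omega

lemma card_pr (s : Fin d) : (st8Pr s).card = 2 := by
  rw [st8Pr, Finset.card_insert_of_notMem, Finset.card_singleton]
  simp [Fin.ext_iff]

lemma card_biUnion_pr (A : Finset (Fin d)) : (A.biUnion st8Pr).card = 2 * A.card := by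
  rw [Finset.card_biUnion]
  · simp [card_pr, mul_comm]
  · intro s _ t _ hst
    simp only [Finset.disjoint_left]
    intro x hx hx'
    rw [mem_pr] at hx hx'
    exact hst (hx ▸ hx')

lemma mem_biUnion_pr {A : Finset (Fin d)} {x : Fin (2 * d)} :
    x ∈ A.biUnion st8Pr ↔ st8Blk x ∈ A := by
  simp only [Finset.mem_biUnion, mem_pr]
  constructor
  · rintro ⟨s, hs, rfl⟩; exact hs
  · intro h; exact ⟨st8Blk x, h, rfl⟩




theorem statement8 (d : ℕ) (hd : 1 ≤ d) (σ : Equiv.Perm (Fin (2 * d))) :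
    ∃ (a b : Fin d → Fin (2 * d)) (τ : Equiv.Perm (Fin d)),
      ∀ s : Fin d,
        2 * (s : ℕ) ≤ ((a s : Fin (2 * d)) : ℕ) ∧ ((a s : Fin (2 * d)) : ℕ) ≤ 2 * (s : ℕ) + 1 ∧
        2 * (s : ℕ) ≤ ((b s : Fin (2 * d)) : ℕ) ∧ ((b s : Fin (2 * d)) : ℕ) ≤ 2 * (s : ℕ) + 1 ∧
        σ (a s) = b (τ s) := by
  classical
  set t : Fin d → Finset (Fin d) := fun s => (st8Pr s).image (fun x => st8Blk (σ x)) with ht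
  have hall : ∀ A : Finset (Fin d), A.card ≤ (A.biUnion t).card := by
    intro A
    have hsub : (A.biUnion st8Pr).image σ ⊆ (A.biUnion t).biUnion st8Pr := by
      intro y hy
      simp only [Finset.mem_image] at hy
      obtain ⟨x, hx, rfl⟩ := hy
      rw [mem_biUnion_pr] at hx
      rw [mem_biUnion_pr]
      simp only [ht, Finset.mem_biUnion, Finset.mem_image]
      exact ⟨st8Blk x, hx, x, mem_pr.mpr rfl, rfl⟩
    have h1 : ((A.biUnion st8Pr).image σ).card = 2 * A.card := by
      rw [Finset.card_image_of_injective _ σ.injective, card_biUnion_pr]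
    have h2 := Finset.card_le_card hsub
    rw [h1, card_biUnion_pr] at h2
    omega
  obtain ⟨f, hfinj, hf⟩ :=
    (Finset.all_card_le_biUnion_card_iff_exists_injective t).mp hall
  have ha : ∀ s, ∃ x ∈ st8Pr s, st8Blk (σ x) = f s := by
    intro s
    have := hf s
    simp only [ht, Finset.mem_image] at this
    exact this
  choose a hamem haf using ha
  let τ : Equiv.Perm (Fin d) := Equiv.ofBijective f (Finite.injective_iff_bijective.mp hfinj)
  have hτ : ∀ s, τ s = f s := fun s => rfl
  refine ⟨a, fun u => σ (a (τ.symm u)), τ, fun s => ?_⟩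
  beta_reduce
  have h1 : st8Blk (a s) = s := mem_pr.mp (hamem s)
  have h2 : st8Blk (σ (a (τ.symm s))) = s := by
    rw [haf, ← hτ, Equiv.apply_symm_apply]
  have h3 : σ (a s) = σ (a (τ.symm (τ s))) := by rw [Equiv.symm_apply_apply]
  refine ⟨?_, ?_, ?_, ?_, h3⟩
  · have := congrArg Fin.val h1; simp only [st8Blk] at this; omega
  · have := congrArg Fin.val h1; simp only [st8Blk] at this; omega
  · have := congrArg Fin.val h2; simp only [st8Blk] at this; omega
  · have := congrArg Fin.val h2; simp only [st8Blk] at this; omega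
end

section
/- Fix d ≥ 1, define φ_{i,j} := Σ_{r=1}^m y_{r,j} ⊗ x_{r,i} ∈ R ⊗_ℂ S for 1 ≤ i,j ≤ m, and let σ ∈ S_{2d} be the permutation with σ(2r) = 2r+2 for 1 ≤ r ≤ d−1, σ(2d) = 2, and σ(2r−1) = 2r−1 for 1 ≤ r ≤ d. Then t_σ = (1/2^d) Σ_{t_1,…,t_d=1}^m φ_{t_2,t_1} φ_{t_3,t_2} ⋯ φ_{t_d,t_{d−1}} φ_{t_1,t_d}, the product taken in the commutative ring R ⊗_ℂ S. (This is the purely even case n = 0 of the paper's lemma identifying t_σ, for σ a cycle of consecutive even letters, with the top-order symbol of the Gelfand element str(𝐄^d).) -/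
noncomputable section

open scoped TensorProduct

/-- φ_{i,j} = Σ_r y_{r,j} ⊗ x_{r,i} ∈ R ⊗ S. -/
def phiT (m : ℕ) (i j : Fin m) : PolyS m ⊗[ℂ] PolyS m :=
  ∑ r : Fin m,
    (MvPolynomial.X (Sym2.mk r j) : PolyS m) ⊗ₜ[ℂ] (MvPolynomial.X (Sym2.mk r i) : PolyS m)

/-!
The permutation σ fixes the odd slots and moves each even slot to the next one, cyclically.
Splitting the summation index `i : Fin (2 * d) → Fin m` into its odd part `a` and even part `b`,
the summand of `t_σ` becomes `∏ₖ y_{aₖ,bₖ} ⊗ ∏ₖ x_{aₖ,b_{k+1}}`. Expanding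
`∏ₛ φ_{tₛ₊₁,tₛ} = ∑_r ∏ₛ y_{rₛ,tₛ} ⊗ ∏ₛ x_{rₛ,tₛ₊₁}` gives the same sum, with `(a, b) = (r, t)`.
-/

theorem Algebra.TensorProduct.prod_tmul {R A B ι : Type*} [CommSemiring R] [CommSemiring A]
    [Algebra R A] [CommSemiring B] [Algebra R B] (s : Finset ι) (a : ι → A) (b : ι → B) :
    ∏ i ∈ s, (a i ⊗ₜ[R] b i) = (∏ i ∈ s, a i) ⊗ₜ[R] (∏ i ∈ s, b i) := by
  induction s using Finset.cons_induction with
  | empty => rfl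
  | cons i s hi ih => simp only [Finset.prod_cons, ih, Algebra.TensorProduct.tmul_mul_tmul]

def finPairEquiv (d : ℕ) : Fin d × Fin 2 ≃ Fin (2 * d) :=
  finProdFinEquiv.trans (finCongr (Nat.mul_comm d 2))

theorem finPairEquiv_zero (d : ℕ) (k : Fin d) : finPairEquiv d (k, 0) = idx0 d k := by
  ext; simp [finPairEquiv, idx0]

theorem finPairEquiv_one (d : ℕ) (k : Fin d) : finPairEquiv d (k, 1) = idx1 d k := by
  ext; simp [finPairEquiv, idx1]; ring

theorem sum_arrow_fin_two_mul {α M : Type*} [Fintype α] [AddCommMonoid M] (d : ℕ)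
    (f : (Fin d → α) → (Fin d → α) → M) :
    ∑ i : Fin (2 * d) → α, f (i ∘ idx0 d) (i ∘ idx1 d) = ∑ a, ∑ b, f a b := by
  let E : (Fin (2 * d) → α) ≃ (Fin d → α) × (Fin d → α) :=
    (((finPairEquiv d).arrowCongr (.refl α)).symm.trans (Equiv.curry _ _ _)).trans
      (((Equiv.refl _).arrowCongr (finTwoArrowEquiv α)).trans (Equiv.arrowProdEquivProdArrow _ _ _))
  have hE : ∀ i, E i = (i ∘ idx0 d, i ∘ idx1 d) := by
    intro i
    ext k <;> simp [E, finTwoArrowEquiv, ← finPairEquiv_zero, ← finPairEquiv_one]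
  rw [← Fintype.sum_prod_type']
  exact Fintype.sum_equiv E _ _ fun i => by rw [hE]

theorem prod_phiT {m : ℕ} {ι : Type*} [Fintype ι] [DecidableEq ι] (u v : ι → Fin m) :
    ∏ s, phiT m (u s) (v s) =
      ∑ r : ι → Fin m, (∏ s, (MvPolynomial.X s(r s, v s) : PolyS m)) ⊗ₜ[ℂ]
        (∏ s, (MvPolynomial.X s(r s, u s) : PolyS m)) := by
  simp only [phiT, Finset.prod_univ_sum, Fintype.piFinset_univ, Algebra.TensorProduct.prod_tmul]

theorem tTen_eq_sum_prod_phiT (m d : ℕ) (σ : Equiv.Perm (Fin (2 * d))) (τ : Fin d → Fin d)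
    (hσ₀ : ∀ k, σ (idx0 d k) = idx0 d k) (hσ₁ : ∀ k, σ (idx1 d k) = idx1 d (τ k)) :
    tTen m d σ = ((1 : ℂ) / 2 ^ d) • ∑ t : Fin d → Fin m, ∏ s, phiT m (t (τ s)) (t s) := by
  simp only [tTen, hσ₀, hσ₁, prod_phiT]
  congr 1
  exact (sum_arrow_fin_two_mul d fun a b => (∏ k, (MvPolynomial.X s(a k, b k) : PolyS m)) ⊗ₜ[ℂ]
    (∏ k, (MvPolynomial.X s(a k, b (τ k)) : PolyS m))).trans Finset.sum_comm

theorem statement11 (m e : ℕ) (σ : Equiv.Perm (Fin (2 * (e + 1))))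
    (h1 : ∀ (s : ℕ) (hs : s + 1 < e + 1),
      σ ⟨2 * s + 1, by omega⟩ = ⟨2 * s + 3, by omega⟩)
    (h2 : σ ⟨2 * (e + 1) - 1, by omega⟩ = ⟨1, by omega⟩)
    (h3 : ∀ (s : ℕ) (hs : s < e + 1),
      σ ⟨2 * s, by omega⟩ = ⟨2 * s, by omega⟩) :
    tTen m (e + 1) σ =
      ((1 : ℂ) / 2 ^ (e + 1)) •
        ∑ t : Fin (e + 1) → Fin m, ∏ s : Fin (e + 1), phiT m (t (s + 1)) (t s) := by
  refine tTen_eq_sum_prod_phiT m (e + 1) σ (· + 1) (fun k => h3 k k.isLt) fun k => ?_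
  obtain ⟨k, rfl⟩ | rfl := Fin.eq_castSucc_or_eq_last k
  · rw [Fin.coeSucc_eq_succ]
    exact h1 k (by omega)
  · rw [Fin.last_add_one]
    exact (congrArg σ (Fin.ext (by simp [idx1]; omega))).trans h2
end
end

section
/- Let M be a nonzero finite-dimensional complex vector space that is an irreducible Lie module over gl_m (m ≥ 1). Then the subspace M^{so_m} := {v ∈ M : x·v = 0 for all x ∈ so_m} has dimension at most 1. (This is the purely even case n = 0 of the paper's lemma that an irreducible finite-dimensional gl(m|2n)-module has at most a one-dimensional space of osp(m|2n)-invariant vectors.) -/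
/-!
STATEMENT 15: If M is a nonzero finite-dimensional irreducible Lie module over gl_m, then the
space of so_m-invariant vectors in M has dimension at most 1.
-/

noncomputable section

open Matrix

attribute [local instance 100] LieRing.ofAssociativeRing

abbrev MatC (m : ℕ) := Matrix (Fin m) (Fin m) ℂ

/-- The subspace of vectors annihilated by all skew-symmetric matrices (so_m-invariants). -/
def soInvariants (m : ℕ) (M : Type*) [AddCommGroup M] [Module ℂ M]
    [LieRingModule (MatC m) M] [LieModule ℂ (MatC m) M] : Submodule ℂ M where
  carrier := {v | ∀ x : MatC m, xᵀ = -x → ⁅x, v⁆ = 0}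
  add_mem' := by
    intro a b ha hb
    intro x hx
    rw [lie_add, ha x hx, hb x hx, add_zero]
  zero_mem' := by
    intro x _
    exact lie_zero x
  smul_mem' := by
    intro c a ha
    intro x hx
    rw [lie_smul, ha x hx, smul_zero]


/-!
The upper triangular matrices form a solvable Lie algebra `𝔟`, so by Lie's theorem `𝔟` has an
eigenvector `ξ ≠ 0` in `M*`; its kernel is a proper `𝔟`-submodule of `M`. Since
`gl_m = so_m + 𝔟`, the `𝔟`-submodule generated by an `so_m`-invariant vector `v` is stable under
all of `gl_m`, hence is `M` if `v ≠ 0`. So no nonzero invariant vector lies in `ker ξ`, i.e. `ξ`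
is injective on the invariants.
-/

namespace LieModule

open LieSubmodule

section Decomposition

variable {R L M : Type*} [CommRing R] [LieRing L] [LieAlgebra R L] [AddCommGroup M] [Module R M]
  [LieRingModule L M] [LieModule R L M] {K B : LieSubalgebra R L}

lemma lie_mem_lieSpan_of_mem_maxTrivSubmodule (hKB : K.toSubmodule ⊔ B.toSubmodule = ⊤)
    {v : M} (hv : v ∈ maxTrivSubmodule R K M) (x : L) {w : M} (hw : w ∈ lieSpan R B {v}) :
    ⁅x, w⁆ ∈ lieSpan R B {v} := by
  set W := lieSpan R B {v}
  let W' : LieSubmodule R B M :=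
    { carrier := {w | ∀ x : L, ⁅x, w⁆ ∈ W}
      add_mem' := fun ha hb x => by rw [lie_add]; exact W.add_mem (ha x) (hb x)
      zero_mem' := fun x => by rw [lie_zero]; exact W.zero_mem
      smul_mem' := fun c w hw x => by rw [lie_smul]; exact W.smul_mem c (hw x)
      lie_mem := fun {b w} hw x => by
        rw [LieSubalgebra.coe_bracket_of_module, leibniz_lie]
        exact W.add_mem (hw _) (W.lie_mem (x := b) (hw x)) }
  have hvW' : v ∈ W' := by
    intro x
    obtain ⟨k, hk, b, hb, rfl⟩ := Submodule.mem_sup.mp (hKB ▸ Submodule.mem_top : x ∈ _)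
    have hkv : ⁅k, v⁆ = 0 := (mem_maxTrivSubmodule R K M v).mp hv ⟨k, hk⟩
    rw [add_lie, hkv, zero_add]
    exact W.lie_mem (x := ⟨b, hb⟩) (subset_lieSpan rfl)
  exact (lieSpan_le.mpr (Set.singleton_subset_iff.mpr hvW') : W ≤ W') hw x

lemma eq_top_of_mem_maxTrivSubmodule [IsIrreducible R L M]
    (hKB : K.toSubmodule ⊔ B.toSubmodule = ⊤) {v : M} (hv : v ∈ maxTrivSubmodule R K M)
    (hv0 : v ≠ 0) (N : LieSubmodule R B M) (hvN : v ∈ N) : N = ⊤ := by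
  let W : LieSubmodule R L M :=
    { (lieSpan R B {v}).toSubmodule with
      lie_mem := lie_mem_lieSpan_of_mem_maxTrivSubmodule hKB hv _ }
  have hW : W = ⊤ := (IsSimpleOrder.eq_bot_or_eq_top W).resolve_left fun h =>
    hv0 <| (mem_bot v).mp (h ▸ subset_lieSpan rfl : v ∈ (⊥ : LieSubmodule R L M))
  refine eq_top_iff.mpr fun w _ => ?_
  have hwW : w ∈ W := hW ▸ mem_top w
  exact lieSpan_le.mpr (Set.singleton_subset_iff.mpr hvN) hwW

end Decomposition

variable {k L M : Type*} [Field k] [CharZero k] [IsAlgClosed k] [LieRing L] [LieAlgebra k L]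
  [AddCommGroup M] [Module k M] [FiniteDimensional k M] [LieRingModule L M] [LieModule k L M]

lemma exists_dual_ne_zero_forall_lie_mem_ker [LieAlgebra.IsSolvable L] [Nontrivial M] :
    ∃ ξ : Module.Dual k M, ξ ≠ 0 ∧ ∀ (x : L) (w : M), ξ w = 0 → ξ ⁅x, w⁆ = 0 := by
  obtain ⟨χ, hχ⟩ := exists_nontrivial_weightSpace_of_isSolvable k L (Module.Dual k M)
  obtain ⟨⟨ξ, hξ⟩, hξ0⟩ := exists_ne (0 : weightSpace (Module.Dual k M) χ)
  refine ⟨ξ, fun h => hξ0 (by simp [h]), fun x w hw => ?_⟩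
  have hξxw := congr($((mem_weightSpace _ _).mp hξ x) w)
  simp only [Module.Dual.lie_apply, LinearMap.smul_apply, hw, smul_zero] at hξxw
  exact neg_eq_zero.mp hξxw

theorem finrank_maxTrivSubmodule_le_one [IsIrreducible k L M] {K B : LieSubalgebra k L}
    [LieAlgebra.IsSolvable B] (hKB : K.toSubmodule ⊔ B.toSubmodule = ⊤) :
    Module.finrank k (maxTrivSubmodule k K M) ≤ 1 := by
  have := nontrivial_of_isIrreducible k L M
  obtain ⟨ξ, hξ0, hξ⟩ := exists_dual_ne_zero_forall_lie_mem_ker (k := k) (L := B) (M := M)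
  let N : LieSubmodule k B M := { LinearMap.ker ξ with lie_mem := hξ _ _ }
  have hinj : Function.Injective (ξ ∘ₗ (maxTrivSubmodule k K M).toSubmodule.subtype) := by
    rw [← LinearMap.ker_eq_bot, LinearMap.ker_eq_bot']
    intro ⟨v, hv⟩ hξv
    by_contra hv0
    have hN : N = ⊤ := eq_top_of_mem_maxTrivSubmodule hKB hv (by simpa using hv0) N hξv
    exact hξ0 (LinearMap.ext fun w => (hN ▸ mem_top w : w ∈ N))
  exact (LinearMap.finrank_le_finrank_of_injective hinj).trans (Module.finrank_self k).le

end LieModule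

namespace Matrix

open LieAlgebra

variable (R : Type*) [CommRing R]

def upperTriangular (n : Type*) [Fintype n] [LinearOrder n] : LieSubalgebra R (Matrix n n R) where
  carrier := {A | A.IsUpperTriangular}
  zero_mem' := blockTriangular_zero
  add_mem' := BlockTriangular.add
  smul_mem' c _ hA _ _ hij := by simp [hA hij]
  lie_mem' hA hB := (hA.mul hB).sub (hB.mul hA)

def aboveDiagonal (m k : ℕ) : Submodule R (Matrix (Fin m) (Fin m) R) where
  carrier := {A | ∀ i j : Fin m, (j : ℕ) < i + k → A i j = 0}
  zero_mem' _ _ _ := rfl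
  add_mem' hA hB i j hij := by simp [hA i j hij, hB i j hij]
  smul_mem' c _ hA i j hij := by simp [hA i j hij]

variable {R}

lemma lie_mem_aboveDiagonal {m k : ℕ} {A B : Matrix (Fin m) (Fin m) R}
    (hA : A ∈ aboveDiagonal R m k) (hB : B ∈ aboveDiagonal R m k) :
    ⁅A, B⁆ ∈ aboveDiagonal R m (k + 1) := by
  intro i j hij
  rw [Ring.lie_def, sub_apply, mul_apply, mul_apply, ← Finset.sum_sub_distrib]
  refine Finset.sum_eq_zero fun l _ => ?_
  by_cases hl : (i : ℕ) + k ≤ l ∧ (l : ℕ) + k ≤ j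
  · -- only possible for `k = 0` on the diagonal, where the two products commute
    obtain ⟨rfl, rfl⟩ : i = l ∧ l = j := by omega
    ring
  have hprod : ∀ C D : Matrix (Fin m) (Fin m) R, C ∈ aboveDiagonal R m k →
      D ∈ aboveDiagonal R m k → C i l * D l j = 0 := by
    intro C D hC hD
    rcases not_and_or.mp hl with h | h
    · rw [hC i l (by omega), zero_mul]
    · rw [hD l j (by omega), mul_zero]
  rw [hprod A B hA hB, hprod B A hB hA, sub_zero]

lemma coe_mem_aboveDiagonal_of_mem_derivedSeries {m : ℕ} (k : ℕ)
    {A : upperTriangular R (Fin m)} (hA : A ∈ derivedSeries R (upperTriangular R (Fin m)) k) :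
    (A : Matrix (Fin m) (Fin m) R) ∈ aboveDiagonal R m k := by
  induction k generalizing A with
  | zero => exact fun i j hij => A.2 (Fin.lt_def.mpr hij)
  | succ k ih =>
    rw [derivedSeries_def, derivedSeriesOfIdeal_succ, ← LieSubmodule.mem_toSubmodule,
      LieSubmodule.lieIdeal_oper_eq_linear_span] at hA
    refine Submodule.span_induction ?_ (Submodule.zero_mem _)
      (fun _ _ _ _ => Submodule.add_mem _) (fun c _ _ => Submodule.smul_mem _ c) hA
    rintro _ ⟨⟨B, hB⟩, ⟨C, hC⟩, rfl⟩
    exact lie_mem_aboveDiagonal (ih hB) (ih hC)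

instance {m : ℕ} : IsSolvable (upperTriangular R (Fin m)) := by
  refine IsSolvable.mk (R := R) (k := m) (eq_bot_iff.mpr fun A hA => ?_)
  ext i j
  exact coe_mem_aboveDiagonal_of_mem_derivedSeries m hA i j (by omega)

lemma so_sup_upperTriangular_eq_top (n : Type*) [Fintype n] [LinearOrder n] :
    (Orthogonal.so n R).toSubmodule ⊔ (upperTriangular R n).toSubmodule = ⊤ := by
  refine eq_top_iff.mpr fun A _ => Submodule.mem_sup.mpr ?_
  let L : Matrix n n R := of fun i j => if j < i then A i j else 0
  refine ⟨L - Lᵀ, ?_, A - (L - Lᵀ), ?_, add_sub_cancel _ _⟩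
  · show L - Lᵀ ∈ Orthogonal.so n R
    rw [Orthogonal.mem_so, transpose_sub, transpose_transpose, neg_sub]
  · intro i j (hij : j < i)
    simp [L, hij, not_lt_of_gt hij]

end Matrix

theorem statement15_general (m : ℕ) (M : Type*) [AddCommGroup M] [Module ℂ M]
    [LieRingModule (MatC m) M] [LieModule ℂ (MatC m) M] [FiniteDimensional ℂ M]
    [LieModule.IsIrreducible ℂ (MatC m) M] :
    Module.finrank ℂ ↥(soInvariants m M) ≤ 1 := by
  have hso : soInvariants m M =
      (LieModule.maxTrivSubmodule ℂ (LieAlgebra.Orthogonal.so (Fin m) ℂ) M).toSubmodule := by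
    ext v
    simp [soInvariants, LieModule.mem_maxTrivSubmodule]
  rw [hso]
  exact LieModule.finrank_maxTrivSubmodule_le_one (Matrix.so_sup_upperTriangular_eq_top (Fin m))

theorem statement15 (m : ℕ) (hm : 1 ≤ m) (M : Type*) [AddCommGroup M] [Module ℂ M]
    [LieRingModule (MatC m) M] [LieModule ℂ (MatC m) M] [FiniteDimensional ℂ M]
    [LieModule.IsIrreducible ℂ (MatC m) M] :
    Module.finrank ℂ ↥(soInvariants m M) ≤ 1 :=
  statement15_general m M
end
end
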